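/- arXiv:1803.08686 — 2 statements merged into one kernel-verified Lean document; each statement's English description precedes it below -/
import Mathlib

section
/- With σ̃²(ρ) = 1 - (αρ)/(αρ + (ᾱρK + σ_z²/γ(ρ) + 1)/T), where γ(ρ) = 2/(π(Kρ+1)) and σ_z² = 1−2/π, the limit as ρ → ∞ of σ̃²(ρ) equals 1 − αT/(αT + ᾱK + (π/2 − 1)K), exhibiting a strictly positive saturation floor whenever ᾱ > 0 or K > 0. -/
/-!
Since `γ(ρ)⁻¹` is affine in `ρ`, the quantization-noise term `σ_z²/γ(ρ) = (π/2 - 1)(Kρ + 1)` grows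
linearly in `ρ`, just like the pilot signal `αρ` and the data interference `ᾱρK`. Dividing numerator
and denominator by `ρ` leaves only a vanishing `1/ρ` term, so the error variance converges to a
constant, which is positive because the interference and quantization slopes are.
-/

open Real Filter Topology

lemma tendsto_mul_div_mul_add_affine_div {a b c T : ℝ} (hT : T ≠ 0) (hden : a * T + b ≠ 0) :
    Tendsto (fun ρ : ℝ => a * ρ / (a * ρ + (b * ρ + c) / T)) atTop (𝓝 (a * T / (a * T + b))) := by
  have hden' : a + b / T ≠ 0 := by
    rwa [← mul_ne_zero_iff_right hT, add_mul, div_mul_cancel₀ _ hT]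
  have hlim : Tendsto (fun ρ : ℝ => a / (a + (b + c * ρ⁻¹) / T)) atTop
      (𝓝 (a / (a + (b + c * 0) / T))) := by
    refine tendsto_const_nhds.div (tendsto_const_nhds.add
      ((tendsto_const_nhds.add (tendsto_inv_atTop_zero.const_mul c)).div_const T)) ?_
    simpa using hden'
  have hval : a / (a + b / T) = a * T / (a * T + b) := by
    field_simp
  rw [mul_zero, add_zero, hval] at hlim
  refine hlim.congr' ?_
  filter_upwards [eventually_gt_atTop 0] with ρ hρ
  field_simp

lemma one_sub_div_add_pos {x y : ℝ} (hx : 0 ≤ x) (hy : 0 < y) : 0 < 1 - x / (x + y) := by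
  rw [sub_pos, div_lt_one (by positivity)]
  linarith

lemma one_sub_two_div_pi_div_gain (K ρ : ℝ) :
    (1 - 2 / π) / (2 / (π * (K * ρ + 1))) = (π / 2 - 1) * (K * ρ + 1) := by
  rw [div_div_eq_mul_div]
  field_simp

/-- High-SNR saturation of the quantized SP LMMSE error variance. -/
theorem stmt1 (K T α : ℝ) (hK : 1 ≤ K) (hT : 0 < T) (hα : α ∈ Set.Ioo (0:ℝ) 1) :
    Tendsto
      (fun ρ : ℝ => 1 - (α * ρ) /
        (α * ρ + ((1 - α) * ρ * K + (1 - 2 / π) / (2 / (π * (K * ρ + 1))) + 1) / T))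
      atTop
      (nhds (1 - α * T / (α * T + (1 - α) * K + (π / 2 - 1) * K))) ∧
    0 < 1 - α * T / (α * T + (1 - α) * K + (π / 2 - 1) * K) := by
  obtain ⟨hα0, hα1⟩ := hα
  set slope := (1 - α) * K + (π / 2 - 1) * K
  have hslope : 0 < slope :=
    add_pos (mul_pos (by linarith) (by linarith)) (mul_pos (by linarith [pi_gt_three]) (by linarith))
  have hfloor : 0 < 1 - α * T / (α * T + slope) :=
    one_sub_div_add_pos (by positivity) hslope
  rw [← add_assoc] at hfloor
  refine ⟨?_, hfloor⟩
  have hlin : ∀ ρ : ℝ, (1 - α) * ρ * K + (1 - 2 / π) / (2 / (π * (K * ρ + 1))) + 1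
      = slope * ρ + π / 2 := by
    intro ρ
    rw [one_sub_two_div_pi_div_gain]
    ring
  simp only [hlin]
  rw [add_assoc]
  exact (tendsto_mul_div_mul_add_affine_div hT.ne' (by positivity)).const_sub 1
end

section
/- Any critical point α* ∈ (0,1) of Υ_UQSP(α) satisfies the quadratic equation obtained from d/dα Υ_UQSP = 0, whose solutions are α* = (δ ± √(δ(Tρ+1)(Kρ+1)T)) / (ρ(K²ρT + K(MρT + ρ − ρT² + T) − T²)), where δ = T(K²ρ² + Kρ(Mρ+2) + 1) + Kρ². -/
open Real

/-!
Write `Υ_UQSP = p / q` with `p(α) = ρ²T²M α (1 - α)` and `q` the denominator, a quadratic in `α`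
that is positive on `[0, 1]`. At a critical point `p' q = p q'`, and for `p = d α (1 - α)` and any
quadratic `q` one has `(1 - 2α) q(α) - α (1 - α) q'(α) = q(0) (1 - α)² - q(1) α²`. So the critical
point satisfies `δ (1 - α)² = ε α²` with `δ = q(0)` and `ε = q(1) = T (Tρ + 1) (Kρ + 1)`, whose roots
are `(δ ± √(δ ε)) / (δ - ε)`; and `δ - ε` is the denominator of the closed form.
-/

theorem HasDerivAt.mul_sub_mul_eq_zero_of_div {𝕜 : Type*} [NontriviallyNormedField 𝕜]
    {f g : 𝕜 → 𝕜} {f' g' x : 𝕜} (hf : HasDerivAt f f' x) (hg : HasDerivAt g g' x)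
    (hx : g x ≠ 0) (h : HasDerivAt (fun y => f y / g y) 0 x) :
    f' * g x - f x * g' = 0 := by
  simpa [hx] using (hf.div hg hx).unique h

theorem hasDerivAt_quadratic {𝕜 : Type*} [NontriviallyNormedField 𝕜] (a b c x : 𝕜) :
    HasDerivAt (fun y => a * y ^ 2 + b * y + c) (2 * a * x + b) x :=
  ((((hasDerivAt_pow 2 x).const_mul a).add ((hasDerivAt_id x).const_mul b)).add_const c).congr_deriv
    (by norm_num; ring)

theorem mul_one_sub_sq_eq_of_hasDerivAt_div_quadratic {𝕜 : Type*} [NontriviallyNormedField 𝕜]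
    {p q : 𝕜 → 𝕜} {a b c d x : 𝕜} (hp : ∀ y, p y = d * (y * (1 - y)))
    (hq : ∀ y, q y = a * y ^ 2 + b * y + c) (hd : d ≠ 0) (hqx : q x ≠ 0)
    (h : HasDerivAt (fun y => p y / q y) 0 x) :
    q 0 * (1 - x) ^ 2 = q 1 * x ^ 2 := by
  have hp' : HasDerivAt p (2 * -d * x + d) x := by
    rw [funext hp]
    convert hasDerivAt_quadratic (-d) d 0 x using 2
    ring
  have hq' : HasDerivAt q (2 * a * x + b) x := by
    rw [funext hq]
    exact hasDerivAt_quadratic a b c x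
  have hcrit := hp'.mul_sub_mul_eq_zero_of_div hq' hqx h
  rw [hp, hq] at hcrit
  apply mul_left_cancel₀ hd
  rw [hq, hq]
  linear_combination hcrit

theorem eq_add_div_or_eq_sub_div_of_mul_one_sub_sq_eq {F : Type*} [Field F] {c e s x : F}
    (hce : c - e ≠ 0) (hs : s * s = c * e) (h : c * (1 - x) ^ 2 = e * x ^ 2) :
    x = (c + s) / (c - e) ∨ x = (c - s) / (c - e) := by
  have hfactor : ((c - e) * x - (c + s)) * ((c - e) * x - (c - s)) = 0 := by
    linear_combination (c - e) * h - hs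
  rcases mul_eq_zero.mp hfactor with hroot | hroot
  · left
    rw [eq_div_iff hce]
    linear_combination hroot
  · right
    rw [eq_div_iff hce]
    linear_combination hroot

def uqspDen (ρ K T M α : ℝ) : ℝ :=
  (1 - α) * ρ^2 * K * T * M + α * ρ * (K * ρ + 1) * T^2 + 2 * α * (1 - α) * ρ^2 * T +
    (1 - α) * ρ^2 * K^2 * T + (2 - α) * ρ * K * T + T + (1 - α)^2 * ρ^2 * K

section uqspDen

variable (ρ K T M : ℝ)

theorem uqspDen_eq_quadratic (α : ℝ) :
    uqspDen ρ K T M α = (ρ^2 * K - 2 * ρ^2 * T) * α ^ 2 +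
      (ρ * (K * ρ + 1) * T^2 + 2 * ρ^2 * T - ρ^2 * K * T * M - ρ^2 * K^2 * T - ρ * K * T
        - 2 * ρ^2 * K) * α +
      (T * (K^2 * ρ^2 + K * ρ * (M * ρ + 2) + 1) + K * ρ^2) := by
  unfold uqspDen
  ring

theorem uqspDen_zero :
    uqspDen ρ K T M 0 = T * (K^2 * ρ^2 + K * ρ * (M * ρ + 2) + 1) + K * ρ^2 := by
  unfold uqspDen
  ring

theorem uqspDen_one : uqspDen ρ K T M 1 = (T * ρ + 1) * (K * ρ + 1) * T := by
  unfold uqspDen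
  ring

variable {ρ K T M}

theorem uqspDen_pos {α : ℝ} (hρ : 0 ≤ ρ) (hK : 0 ≤ K) (hT : 0 < T) (hM : 0 ≤ M) (h0 : 0 ≤ α)
    (h1 : α ≤ 1) : 0 < uqspDen ρ K T M α := by
  have h1' : 0 ≤ 1 - α := by linarith
  have h2' : 0 ≤ 2 - α := by linarith
  unfold uqspDen
  positivity

end uqspDen

/-- Any interior critical point of the unquantized effective SNR `Υ_UQSP(α)` is one of the
two closed-form roots of Corollary 2. -/
theorem stmt6 (ρ K T M : ℝ) (hρ : 0 < ρ) (hK : 1 ≤ K) (hT : 0 < T) (hM : 0 < M)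
    (αstar : ℝ) (hmem : αstar ∈ Set.Ioo (0:ℝ) 1)
    (hden : ρ * (K^2 * ρ * T + K * (M * ρ * T + ρ - ρ * T^2 + T) - T^2) ≠ 0)
    (hcrit : HasDerivAt
      (fun α : ℝ => α * (1 - α) * ρ^2 * T^2 * M /
        ((1 - α) * ρ^2 * K * T * M + α * ρ * (K * ρ + 1) * T^2 + 2 * α * (1 - α) * ρ^2 * T +
          (1 - α) * ρ^2 * K^2 * T + (2 - α) * ρ * K * T + T + (1 - α)^2 * ρ^2 * K))
      0 αstar) :
    αstar = (T * (K^2 * ρ^2 + K * ρ * (M * ρ + 2) + 1) + K * ρ^2 +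
        Real.sqrt ((T * (K^2 * ρ^2 + K * ρ * (M * ρ + 2) + 1) + K * ρ^2) *
          (T * ρ + 1) * (K * ρ + 1) * T)) /
      (ρ * (K^2 * ρ * T + K * (M * ρ * T + ρ - ρ * T^2 + T) - T^2)) ∨
    αstar = (T * (K^2 * ρ^2 + K * ρ * (M * ρ + 2) + 1) + K * ρ^2 -
        Real.sqrt ((T * (K^2 * ρ^2 + K * ρ * (M * ρ + 2) + 1) + K * ρ^2) *
          (T * ρ + 1) * (K * ρ + 1) * T)) /
      (ρ * (K^2 * ρ * T + K * (M * ρ * T + ρ - ρ * T^2 + T) - T^2)) := by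
  obtain ⟨hα0, hα1⟩ := hmem
  have hK0 : 0 ≤ K := by linarith
  have hbalance : uqspDen ρ K T M 0 * (1 - αstar) ^ 2 = uqspDen ρ K T M 1 * αstar ^ 2 :=
    mul_one_sub_sq_eq_of_hasDerivAt_div_quadratic (p := fun α => α * (1 - α) * ρ^2 * T^2 * M)
      (d := ρ^2 * T^2 * M) (fun y => by ring) (uqspDen_eq_quadratic ρ K T M) (by positivity)
      (uqspDen_pos hρ.le hK0 hT hM.le hα0.le hα1.le).ne' hcrit
  rw [uqspDen_zero, uqspDen_one] at hbalance
  have hA : ρ * (K^2 * ρ * T + K * (M * ρ * T + ρ - ρ * T^2 + T) - T^2) =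
      T * (K^2 * ρ^2 + K * ρ * (M * ρ + 2) + 1) + K * ρ^2 - (T * ρ + 1) * (K * ρ + 1) * T := by
    ring
  rw [hA] at hden ⊢
  rw [show ∀ δ : ℝ, δ * (T * ρ + 1) * (K * ρ + 1) * T = δ * ((T * ρ + 1) * (K * ρ + 1) * T) by
    intro δ; ring]
  exact eq_add_div_or_eq_sub_div_of_mul_one_sub_sq_eq hden (mul_self_sqrt (by positivity)) hbalance
end
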